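/- (Lemma on the Levi-Civita connection of the Sasaki metric.) Let U ⊆ ℝⁿ be open with a metric g and an affine connection D given by Christoffel symbols Γ, let ∇ denote the Levi-Civita connection of g on U, and let ∇̃ be the Levi-Civita connection of the Sasaki metric g̃^D on TU = U × ℝⁿ. Then for all constant v, w, z ∈ ℝⁿ and all (x,ξ) ∈ TU, with all lifts taken at (x,ξ): (1) (∇̃_{v^H} w^H)(x,ξ) = (Γ^∇(x)(v)(w))^H − ½(R^D(x)(v,w)(ξ))^V; (2) g̃^D(∇̃_{v^V} w^H, z^H) = g̃^D(∇̃_{w^H} v^V, z^H) = ½ g(x)(R^D(x)(w,z)(ξ), v); (3) g̃^D(∇̃_{v^V} w^H, z^V) = ½ (D_w g)(x)(z, v); (4) g̃^D(∇̃_{v^H} w^V, z^V) = g(x)(Γ(x)(v)(w), z) + ½ (D_v g)(x)(w, z); (5) g̃^D(∇̃_{v^V} w^V, z^H) = −½ (D_z g)(x)(v, w); (6) g̃^D(∇̃_{v^V} w^V, z^V) = 0. -/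

import Mathlib

set_option maxHeartbeats 2000000
set_option synthInstance.maxHeartbeats 1000000


/-!
STATEMENT 9: formulas for the Levi-Civita connection ∇̃ of the Sasaki metric
g̃^D on TU = U × ℝⁿ, evaluated on horizontal and vertical lifts.
-/

/-- Curvature of the connection with Christoffel symbols `Γ`. -/
noncomputable def curv {n : ℕ}
    (Γ : (Fin n → ℝ) → (Fin n → ℝ) →L[ℝ] (Fin n → ℝ) →L[ℝ] (Fin n → ℝ))
    (x v w z : Fin n → ℝ) : Fin n → ℝ :=
  fderiv ℝ Γ x v w z - fderiv ℝ Γ x w v z + Γ x v (Γ x w z) - Γ x w (Γ x v z)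

/-- Covariant derivative of the metric `g` with respect to the connection `Γ`. -/
noncomputable def covg {n : ℕ}
    (g : (Fin n → ℝ) → (Fin n → ℝ) →L[ℝ] (Fin n → ℝ) →L[ℝ] ℝ)
    (Γ : (Fin n → ℝ) → (Fin n → ℝ) →L[ℝ] (Fin n → ℝ) →L[ℝ] (Fin n → ℝ))
    (x v y z : Fin n → ℝ) : ℝ :=
  fderiv ℝ g x v y z - g x (Γ x v y) z - g x y (Γ x v z)

/-- Horizontal lift of `v` at `(x,ξ)`: `v^H = (v, −Γ(x)(v)(ξ))`. -/
noncomputable def hor {n : ℕ}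
    (Γ : (Fin n → ℝ) → (Fin n → ℝ) →L[ℝ] (Fin n → ℝ) →L[ℝ] (Fin n → ℝ))
    (x ξ v : Fin n → ℝ) : (Fin n → ℝ) × (Fin n → ℝ) :=
  (v, -(Γ x v ξ))

/-- Vertical lift of `v`: `v^V = (0, v)`. -/
def ver {n : ℕ} (v : Fin n → ℝ) : (Fin n → ℝ) × (Fin n → ℝ) :=
  (0, v)

/-- The Sasaki metric `g̃^D` at `(x,ξ)`. -/
noncomputable def sasaki {n : ℕ}
    (g : (Fin n → ℝ) → (Fin n → ℝ) →L[ℝ] (Fin n → ℝ) →L[ℝ] ℝ)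
    (Γ : (Fin n → ℝ) → (Fin n → ℝ) →L[ℝ] (Fin n → ℝ) →L[ℝ] (Fin n → ℝ))
    (x ξ : Fin n → ℝ) (A B : (Fin n → ℝ) × (Fin n → ℝ)) : ℝ :=
  g x A.1 B.1 + g x (A.2 + Γ x A.1 ξ) (B.2 + Γ x B.1 ξ)

/-- Covariant derivative of a vector field `B` in the direction of a vector field
`A` for the connection on TU with Christoffel symbols `Γt`:
`(∇̃_A B)(a) = (fderiv ℝ B a)(A a) + Γ̃(a)(A a)(B a)`. -/
noncomputable def nabt {n : ℕ}
    (Γt : (Fin n → ℝ) × (Fin n → ℝ) →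
      ((Fin n → ℝ) × (Fin n → ℝ)) →L[ℝ] ((Fin n → ℝ) × (Fin n → ℝ)) →L[ℝ]
        ((Fin n → ℝ) × (Fin n → ℝ)))
    (A B : (Fin n → ℝ) × (Fin n → ℝ) → (Fin n → ℝ) × (Fin n → ℝ))
    (a : (Fin n → ℝ) × (Fin n → ℝ)) : (Fin n → ℝ) × (Fin n → ℝ) :=
  fderiv ℝ B a (A a) + Γt a (A a) (B a)

/-- auxiliary: the value of the derivative of the Sasaki metric -/
noncomputable def dd {n : ℕ}
    (g : (Fin n → ℝ) → (Fin n → ℝ) →L[ℝ] (Fin n → ℝ) →L[ℝ] ℝ)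
    (Γ : (Fin n → ℝ) → (Fin n → ℝ) →L[ℝ] (Fin n → ℝ) →L[ℝ] (Fin n → ℝ))
    (x ξ : Fin n → ℝ) (A B C : (Fin n → ℝ) × (Fin n → ℝ)) : ℝ :=
  fderiv ℝ g x A.1 B.1 C.1
    + fderiv ℝ g x A.1 (B.2 + Γ x B.1 ξ) (C.2 + Γ x C.1 ξ)
    + g x (fderiv ℝ Γ x A.1 B.1 ξ + Γ x B.1 A.2) (C.2 + Γ x C.1 ξ)
    + g x (B.2 + Γ x B.1 ξ) (fderiv ℝ Γ x A.1 C.1 ξ + Γ x C.1 A.2)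

lemma sasaki_fderiv {n : ℕ} {U : Set (Fin n → ℝ)} (hU : IsOpen U)
    (g : (Fin n → ℝ) → (Fin n → ℝ) →L[ℝ] (Fin n → ℝ) →L[ℝ] ℝ)
    (hg : ContDiffOn ℝ (⊤ : ℕ∞) g U)
    (Γ : (Fin n → ℝ) → (Fin n → ℝ) →L[ℝ] (Fin n → ℝ) →L[ℝ] (Fin n → ℝ))
    (hΓ : ContDiffOn ℝ (⊤ : ℕ∞) Γ U)
    {x : Fin n → ℝ} (hx : x ∈ U) (ξ : Fin n → ℝ)
    (B C A : (Fin n → ℝ) × (Fin n → ℝ)) :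
    fderiv ℝ (fun p : (Fin n → ℝ) × (Fin n → ℝ) => sasaki g Γ p.1 p.2 B C) (x, ξ) A
      = dd g Γ x ξ A B C := by
  have hgd : HasFDerivAt g (fderiv ℝ g x) x :=
    ((hg.contDiffAt (hU.mem_nhds hx)).differentiableAt (by simp)).hasFDerivAt
  have hΓd : HasFDerivAt Γ (fderiv ℝ Γ x) x :=
    ((hΓ.contDiffAt (hU.mem_nhds hx)).differentiableAt (by simp)).hasFDerivAt
  have h1 : HasFDerivAt (fun p : (Fin n → ℝ) × (Fin n → ℝ) => g p.1)
      ((fderiv ℝ g x).comp (ContinuousLinearMap.fst ℝ _ _)) (x, ξ) :=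
    HasFDerivAt.comp (g := g) (x, ξ) hgd (hasFDerivAt_fst (𝕜 := ℝ) (p := (x, ξ)))
  have h2 : HasFDerivAt (fun p : (Fin n → ℝ) × (Fin n → ℝ) => Γ p.1)
      ((fderiv ℝ Γ x).comp (ContinuousLinearMap.fst ℝ _ _)) (x, ξ) :=
    HasFDerivAt.comp (g := Γ) (x, ξ) hΓd (hasFDerivAt_fst (𝕜 := ℝ) (p := (x, ξ)))
  have hB := ((hasFDerivAt_const B.2 ((x, ξ) : (Fin n → ℝ) × (Fin n → ℝ))).add
    (((h2.clm_apply (hasFDerivAt_const B.1 _)).clm_apply hasFDerivAt_snd)))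
  have hC := ((hasFDerivAt_const C.2 ((x, ξ) : (Fin n → ℝ) × (Fin n → ℝ))).add
    (((h2.clm_apply (hasFDerivAt_const C.1 _)).clm_apply hasFDerivAt_snd)))
  have hmain := ((h1.clm_apply (hasFDerivAt_const B.1 _)).clm_apply
      (hasFDerivAt_const C.1 _)).add ((h1.clm_apply hB).clm_apply hC)
  have : fderiv ℝ (fun p : (Fin n → ℝ) × (Fin n → ℝ) => g p.1 B.1 C.1
      + g p.1 (B.2 + Γ p.1 B.1 p.2) (C.2 + Γ p.1 C.1 p.2)) (x, ξ) = _ := hmain.fderiv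
  rw [show (fun p : (Fin n → ℝ) × (Fin n → ℝ) => sasaki g Γ p.1 p.2 B C) =
    (fun p : (Fin n → ℝ) × (Fin n → ℝ) => g p.1 B.1 C.1
      + g p.1 (B.2 + Γ p.1 B.1 p.2) (C.2 + Γ p.1 C.1 p.2)) from rfl, this]
  simp [dd, ContinuousLinearMap.add_apply, ContinuousLinearMap.comp_apply,
    ContinuousLinearMap.flip_apply, ContinuousLinearMap.coe_fst',
    ContinuousLinearMap.coe_snd', map_add, map_zero]
  ring

lemma gapp_fderiv {n : ℕ} {U : Set (Fin n → ℝ)} (hU : IsOpen U)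
    (g : (Fin n → ℝ) → (Fin n → ℝ) →L[ℝ] (Fin n → ℝ) →L[ℝ] ℝ)
    (hg : ContDiffOn ℝ (⊤ : ℕ∞) g U)
    {x : Fin n → ℝ} (hx : x ∈ U) (b c a : Fin n → ℝ) :
    fderiv ℝ (fun y => g y b c) x a = fderiv ℝ g x a b c := by
  have hgd : HasFDerivAt g (fderiv ℝ g x) x :=
    ((hg.contDiffAt (hU.mem_nhds hx)).differentiableAt (by simp)).hasFDerivAt
  have h := ((hgd.clm_apply (hasFDerivAt_const b x)).clm_apply (hasFDerivAt_const c x)).fderiv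
  rw [h]
  simp

lemma Dg_symm {n : ℕ} {U : Set (Fin n → ℝ)} (hU : IsOpen U)
    (g : (Fin n → ℝ) → (Fin n → ℝ) →L[ℝ] (Fin n → ℝ) →L[ℝ] ℝ)
    (hg : ContDiffOn ℝ (⊤ : ℕ∞) g U)
    (hgsymm : ∀ x ∈ U, ∀ v w : Fin n → ℝ, g x v w = g x w v)
    {x : Fin n → ℝ} (hx : x ∈ U) (a b c : Fin n → ℝ) :
    fderiv ℝ g x a b c = fderiv ℝ g x a c b := by
  rw [← gapp_fderiv hU g hg hx b c a, ← gapp_fderiv hU g hg hx c b a]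
  have : (fun y => g y b c) =ᶠ[nhds x] (fun y => g y c b) :=
    Filter.eventuallyEq_of_mem (hU.mem_nhds hx) (fun y hy => hgsymm y hy b c)
  rw [this.fderiv_eq]

lemma hor_fderiv {n : ℕ} {U : Set (Fin n → ℝ)} (hU : IsOpen U)
    (Γ : (Fin n → ℝ) → (Fin n → ℝ) →L[ℝ] (Fin n → ℝ) →L[ℝ] (Fin n → ℝ))
    (hΓ : ContDiffOn ℝ (⊤ : ℕ∞) Γ U)
    {x : Fin n → ℝ} (hx : x ∈ U) (ξ w : Fin n → ℝ)
    (A : (Fin n → ℝ) × (Fin n → ℝ)) :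
    fderiv ℝ (fun p : (Fin n → ℝ) × (Fin n → ℝ) => hor Γ p.1 p.2 w) (x, ξ) A
      = (0, -(fderiv ℝ Γ x A.1 w ξ + Γ x w A.2)) := by
  have hΓd : HasFDerivAt Γ (fderiv ℝ Γ x) x :=
    ((hΓ.contDiffAt (hU.mem_nhds hx)).differentiableAt (by simp)).hasFDerivAt
  have h2 : HasFDerivAt (fun p : (Fin n → ℝ) × (Fin n → ℝ) => Γ p.1)
      ((fderiv ℝ Γ x).comp (ContinuousLinearMap.fst ℝ _ _)) (x, ξ) :=
    HasFDerivAt.comp (g := Γ) (x, ξ) hΓd (hasFDerivAt_fst (𝕜 := ℝ) (p := (x, ξ)))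
  have h4 := ((h2.clm_apply (hasFDerivAt_const w _)).clm_apply hasFDerivAt_snd).neg
  have hmain := (hasFDerivAt_const w ((x, ξ) : (Fin n → ℝ) × (Fin n → ℝ))).prodMk h4
  have : fderiv ℝ (fun p : (Fin n → ℝ) × (Fin n → ℝ) => ((w : Fin n → ℝ), -(Γ p.1 w p.2))) (x, ξ)
      = _ := hmain.fderiv
  rw [show (fun p : (Fin n → ℝ) × (Fin n → ℝ) => hor Γ p.1 p.2 w) =
    (fun p : (Fin n → ℝ) × (Fin n → ℝ) => ((w : Fin n → ℝ), -(Γ p.1 w p.2))) from rfl, this]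
  simp [ContinuousLinearMap.add_apply, ContinuousLinearMap.comp_apply,
    ContinuousLinearMap.flip_apply, ContinuousLinearMap.coe_fst',
    ContinuousLinearMap.coe_snd', map_add, map_zero]
  abel

lemma sasaki_add_left {n : ℕ}
    (g : (Fin n → ℝ) → (Fin n → ℝ) →L[ℝ] (Fin n → ℝ) →L[ℝ] ℝ)
    (Γ : (Fin n → ℝ) → (Fin n → ℝ) →L[ℝ] (Fin n → ℝ) →L[ℝ] (Fin n → ℝ))
    (x ξ : Fin n → ℝ) (P Q R : (Fin n → ℝ) × (Fin n → ℝ)) :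
    sasaki g Γ x ξ (P + Q) R = sasaki g Γ x ξ P R + sasaki g Γ x ξ Q R := by
  simp only [sasaki, Prod.fst_add, Prod.snd_add, map_add, ContinuousLinearMap.add_apply]
  ring

lemma g_ext {n : ℕ} {U : Set (Fin n → ℝ)}
    (g : (Fin n → ℝ) → (Fin n → ℝ) →L[ℝ] (Fin n → ℝ) →L[ℝ] ℝ)
    (hgpos : ∀ x ∈ U, ∀ v : Fin n → ℝ, v ≠ 0 → 0 < g x v v)
    {x : Fin n → ℝ} (hx : x ∈ U) {a b : Fin n → ℝ}
    (h : ∀ u, g x a u = g x b u) : a = b := by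
  by_contra hne
  have hpos := hgpos x hx (a - b) (sub_ne_zero.mpr hne)
  have h1 := h (a - b)
  simp only [map_sub, ContinuousLinearMap.sub_apply] at h1 hpos
  linarith

lemma sasaki_ext {n : ℕ} {U : Set (Fin n → ℝ)}
    (g : (Fin n → ℝ) → (Fin n → ℝ) →L[ℝ] (Fin n → ℝ) →L[ℝ] ℝ)
    (hgpos : ∀ x ∈ U, ∀ v : Fin n → ℝ, v ≠ 0 → 0 < g x v v)
    (Γ : (Fin n → ℝ) → (Fin n → ℝ) →L[ℝ] (Fin n → ℝ) →L[ℝ] (Fin n → ℝ))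
    {x : Fin n → ℝ} (hx : x ∈ U) (ξ : Fin n → ℝ)
    {X Y : (Fin n → ℝ) × (Fin n → ℝ)}
    (hH : ∀ u, sasaki g Γ x ξ X (hor Γ x ξ u) = sasaki g Γ x ξ Y (hor Γ x ξ u))
    (hV : ∀ u, sasaki g Γ x ξ X (ver u) = sasaki g Γ x ξ Y (ver u)) : X = Y := by
  have h1 : X.1 = Y.1 := by
    apply g_ext g hgpos hx
    intro u
    have := hH u
    simpa [sasaki, hor] using this
  have h2 : X.2 + Γ x X.1 ξ = Y.2 + Γ x Y.1 ξ := by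
    apply g_ext g hgpos hx
    intro u
    have := hV u
    simpa [sasaki, ver] using this
  rw [h1] at h2
  exact Prod.ext h1 (add_right_cancel h2)


theorem statement9 (n : ℕ) (hn : 1 ≤ n) (U : Set (Fin n → ℝ)) (hU : IsOpen U)
    (g : (Fin n → ℝ) → (Fin n → ℝ) →L[ℝ] (Fin n → ℝ) →L[ℝ] ℝ)
    (hg : ContDiffOn ℝ (⊤ : ℕ∞) g U)
    (hgsymm : ∀ x ∈ U, ∀ v w : Fin n → ℝ, g x v w = g x w v)
    (hgpos : ∀ x ∈ U, ∀ v : Fin n → ℝ, v ≠ 0 → 0 < g x v v)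
    (Γ : (Fin n → ℝ) → (Fin n → ℝ) →L[ℝ] (Fin n → ℝ) →L[ℝ] (Fin n → ℝ))
    (hΓ : ContDiffOn ℝ (⊤ : ℕ∞) Γ U)
    -- the Levi-Civita connection ∇ of g, with Christoffel symbols Γnab,
    -- determined by symmetry and metric compatibility
    (Γnab : (Fin n → ℝ) → (Fin n → ℝ) →L[ℝ] (Fin n → ℝ) →L[ℝ] (Fin n → ℝ))
    (hΓnab : ContDiffOn ℝ (⊤ : ℕ∞) Γnab U)
    (hΓnabsymm : ∀ x ∈ U, ∀ v w : Fin n → ℝ, Γnab x v w = Γnab x w v)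
    (hΓnabcompat : ∀ x ∈ U, ∀ v y z : Fin n → ℝ,
      fderiv ℝ g x v y z = g x (Γnab x v y) z + g x y (Γnab x v z))
    -- the Levi-Civita connection ∇̃ of the Sasaki metric, with Christoffel
    -- symbols Γt, determined by symmetry and metric compatibility with g̃^D
    (Γt : (Fin n → ℝ) × (Fin n → ℝ) →
      ((Fin n → ℝ) × (Fin n → ℝ)) →L[ℝ] ((Fin n → ℝ) × (Fin n → ℝ)) →L[ℝ]
        ((Fin n → ℝ) × (Fin n → ℝ)))
    (hΓt : ContDiffOn ℝ (⊤ : ℕ∞) Γt {p | p.1 ∈ U})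
    (hΓtsymm : ∀ a : (Fin n → ℝ) × (Fin n → ℝ), a.1 ∈ U →
      ∀ A B : (Fin n → ℝ) × (Fin n → ℝ), Γt a A B = Γt a B A)
    (hΓtcompat : ∀ a : (Fin n → ℝ) × (Fin n → ℝ), a.1 ∈ U →
      ∀ A B C : (Fin n → ℝ) × (Fin n → ℝ),
        fderiv ℝ (fun p => sasaki g Γ p.1 p.2 B C) a A
          = sasaki g Γ a.1 a.2 (Γt a A B) C + sasaki g Γ a.1 a.2 B (Γt a A C)) :
    ∀ x ∈ U, ∀ ξ v w z : Fin n → ℝ,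
      -- (1)
      nabt Γt (fun p => hor Γ p.1 p.2 v) (fun p => hor Γ p.1 p.2 w) (x, ξ)
          = hor Γ x ξ (Γnab x v w) - (1/2 : ℝ) • ver (curv Γ x v w ξ)
      -- (2)
      ∧ sasaki g Γ x ξ
            (nabt Γt (fun _ => ver v) (fun p => hor Γ p.1 p.2 w) (x, ξ))
            (hor Γ x ξ z)
          = (1/2) * g x (curv Γ x w z ξ) v
      ∧ sasaki g Γ x ξ
            (nabt Γt (fun p => hor Γ p.1 p.2 w) (fun _ => ver v) (x, ξ))
            (hor Γ x ξ z)
          = (1/2) * g x (curv Γ x w z ξ) v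
      -- (3)
      ∧ sasaki g Γ x ξ
            (nabt Γt (fun _ => ver v) (fun p => hor Γ p.1 p.2 w) (x, ξ))
            (ver z)
          = (1/2) * covg g Γ x w z v
      -- (4)
      ∧ sasaki g Γ x ξ
            (nabt Γt (fun p => hor Γ p.1 p.2 v) (fun _ => ver w) (x, ξ))
            (ver z)
          = g x (Γ x v w) z + (1/2) * covg g Γ x v w z
      -- (5)
      ∧ sasaki g Γ x ξ
            (nabt Γt (fun _ => ver v) (fun _ => ver w) (x, ξ))
            (hor Γ x ξ z)
          = -(1/2) * covg g Γ x z v w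
      -- (6)
      ∧ sasaki g Γ x ξ
            (nabt Γt (fun _ => ver v) (fun _ => ver w) (x, ξ))
            (ver z)
          = 0 := by
  
  intro x hx ξ v w z
  have hd : ∀ B C A : (Fin n → ℝ) × (Fin n → ℝ),
      fderiv ℝ (fun p : (Fin n → ℝ) × (Fin n → ℝ) => sasaki g Γ p.1 p.2 B C) (x, ξ) A
        = dd g Γ x ξ A B C := fun B C A => sasaki_fderiv hU g hg Γ hΓ hx ξ B C A
  have ssymm : ∀ P Q, sasaki g Γ x ξ P Q = sasaki g Γ x ξ Q P := by
    intro P Q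
    unfold sasaki
    rw [hgsymm x hx P.1 Q.1, hgsymm x hx (P.2 + Γ x P.1 ξ) (Q.2 + Γ x Q.1 ξ)]
  have kos2 : ∀ A B C : (Fin n → ℝ) × (Fin n → ℝ),
      2 * sasaki g Γ x ξ (Γt (x, ξ) A B) C
        = dd g Γ x ξ A B C + dd g Γ x ξ B A C - dd g Γ x ξ C A B := by
    intro A B C
    have e1 := hΓtcompat (x, ξ) hx A B C
    have e2 := hΓtcompat (x, ξ) hx B A C
    have e3 := hΓtcompat (x, ξ) hx C A B
    rw [hΓtsymm (x, ξ) hx B A] at e2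
    rw [hΓtsymm (x, ξ) hx C A, hΓtsymm (x, ξ) hx C B] at e3
    rw [hd] at e1 e2 e3
    simp only at e1 e2 e3
    rw [ssymm (Γt (x, ξ) A C) B] at e3
    linarith [e1, e2, e3]
  have hfc : ∀ P : (Fin n → ℝ) × (Fin n → ℝ),
      fderiv ℝ (fun _ : (Fin n → ℝ) × (Fin n → ℝ) => P) (x, ξ) = 0 :=
    fun P => fderiv_const_apply P
  refine ⟨?_, ?_, ?_, ?_, ?_, ?_, ?_⟩
  · -- (1)
    apply sasaki_ext g hgpos Γ hx ξ
    · intro u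
      have e := kos2 (hor Γ x ξ v) (hor Γ x ξ w) (hor Γ x ξ u)
      have c1 := hΓnabcompat x hx v w u
      have c2 := hΓnabcompat x hx w v u
      have c3 := hΓnabcompat x hx u v w
      rw [hΓnabsymm x hx w v] at c2
      rw [hΓnabsymm x hx u v, hΓnabsymm x hx u w] at c3
      simp only [nabt]
      rw [hor_fderiv hU Γ hΓ hx ξ w (hor Γ x ξ v), sasaki_add_left]
      simp only [dd, hor, ver, sasaki, curv] at e ⊢
      simp at e ⊢
      linarith [e, c1, c2, c3, hgsymm x hx (Γnab x v u) w, hgsymm x hx (Γnab x v w) u,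
        hgsymm x hx (Γnab x w u) v]
    · intro u
      have e := kos2 (hor Γ x ξ v) (hor Γ x ξ w) (ver u)
      simp only [nabt]
      rw [hor_fderiv hU Γ hΓ hx ξ w (hor Γ x ξ v), sasaki_add_left]
      simp only [dd, hor, ver, sasaki, curv] at e ⊢
      simp at e ⊢
      linarith [e]
  · -- (2a)
    have e := kos2 (ver v) (hor Γ x ξ w) (hor Γ x ξ z)
    simp only [nabt]
    rw [hor_fderiv hU Γ hΓ hx ξ w (ver v), sasaki_add_left]
    simp only [dd, hor, ver, sasaki, curv] at e ⊢
    simp at e ⊢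
    linarith [e, hgsymm x hx v (fderiv ℝ Γ x w z ξ), hgsymm x hx v (fderiv ℝ Γ x z w ξ),
      hgsymm x hx v (Γ x z (Γ x w ξ)), hgsymm x hx v (Γ x w (Γ x z ξ))]
  · -- (2b)
    have e := kos2 (hor Γ x ξ w) (ver v) (hor Γ x ξ z)
    simp only [nabt, hfc, ContinuousLinearMap.zero_apply, zero_add]
    simp only [dd, hor, ver, sasaki, curv] at e ⊢
    simp at e ⊢
    linarith [e, hgsymm x hx v (fderiv ℝ Γ x w z ξ), hgsymm x hx v (fderiv ℝ Γ x z w ξ),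
      hgsymm x hx v (Γ x z (Γ x w ξ)), hgsymm x hx v (Γ x w (Γ x z ξ))]
  · -- (3)
    have e := kos2 (ver v) (hor Γ x ξ w) (ver z)
    simp only [nabt]
    rw [hor_fderiv hU Γ hΓ hx ξ w (ver v), sasaki_add_left]
    simp only [dd, hor, ver, sasaki, covg] at e ⊢
    simp at e ⊢
    linarith [e, Dg_symm hU g hg hgsymm hx w v z, hgsymm x hx v (Γ x w z),
      hgsymm x hx (Γ x w v) z]
  · -- (4)
    have e := kos2 (hor Γ x ξ v) (ver w) (ver z)
    simp only [nabt, hfc, ContinuousLinearMap.zero_apply, zero_add]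
    simp only [dd, hor, ver, sasaki, covg] at e ⊢
    simp at e ⊢
    linarith [e, hgsymm x hx (Γ x v z) w]
  · -- (5)
    have e := kos2 (ver v) (ver w) (hor Γ x ξ z)
    simp only [nabt, hfc, ContinuousLinearMap.zero_apply, zero_add]
    simp only [dd, hor, ver, sasaki, covg] at e ⊢
    simp at e ⊢
    linarith [e, hgsymm x hx w (Γ x z v), hgsymm x hx v (Γ x z w)]
  · -- (6)
    have e := kos2 (ver v) (ver w) (ver z)
    simp only [nabt, hfc, ContinuousLinearMap.zero_apply, zero_add]
    simp only [dd, ver, sasaki] at e ⊢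
    simp at e ⊢
    linarith [e]
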